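/- arXiv:1505.02554 — 4 statements merged into one kernel-verified Lean document; each statement's English description precedes it below -/
import Mathlib

section
/- Let q be an odd prime with q − 1 = 2m + 4 (so h = 2 in the notation above). Then the polynomial Ψ_Γ(z) = Σ_{l=1}^{q−1} ∏_{j=1}^2 (z − ξ^{s̄_j l})(z − ξ^{−s̄_j l}) is independent of the choice of the pair (s̄₁, s̄₂): its coefficients are determined by q alone (a₀ = a₄ = q−1, a₁ = a₃ = 2m, a₂ = m(q−2m+1) up to sign conventions). -/
/-!
For a primitive `q`-th root of unity `ξ` and `q ∤ k`, the geometric sum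
`∑_{l=1}^{q-1} ξ^{kl}` equals `-1`. Each summand of `Ψ_Γ` is
`(X² - a_l X + 1)(X² - b_l X + 1)` with `a_l = ξ^{s̄₁l} + ξ^{-s̄₁l}`, `b_l = ξ^{s̄₂l} + ξ^{-s̄₂l}`,
so its coefficients are `q - 1`, `∑ (a_l + b_l)` and `∑ a_l b_l`. Expanding `a_l b_l` gives
the four exponents `±s̄₁ ± s̄₂`, none divisible by `q`, so every one of these sums is `-1` and
`Ψ_Γ = (q - 1)(X⁴ + 2X² + 1) + 4(X³ + X) - 4X²` whatever the pair.
-/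

open Polynomial Finset

theorem sum_quadratic_mul_quadratic {R ι : Type*} [CommRing R] (s : Finset ι) (a b : ι → R) :
    ∑ i ∈ s, (X ^ 2 - C (a i) * X + 1) * (X ^ 2 - C (b i) * X + 1) =
      (#s : R[X]) * (X ^ 4 + 2 * X ^ 2 + 1) - C (∑ i ∈ s, (a i + b i)) * (X ^ 3 + X)
        + C (∑ i ∈ s, a i * b i) * X ^ 2 := by
  have expand : ∀ i, (X ^ 2 - C (a i) * X + 1) * (X ^ 2 - C (b i) * X + 1) =
      (X ^ 4 + 2 * X ^ 2 + 1) - C (a i + b i) * (X ^ 3 + X) + C (a i * b i) * X ^ 2 := by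
    intro i; rw [C_add, C_mul]; ring
  simp only [expand, sum_add_distrib, sum_sub_distrib, ← sum_mul, ← map_sum, sum_const,
    nsmul_eq_mul]
  ring

section

variable {K : Type*} [Field K] {ξ : K} {q : ℕ}

theorem IsPrimitiveRoot.sum_Icc_zpow_mul_eq_neg_one (hprim : IsPrimitiveRoot ξ q)
    (hq : q ≠ 0) {k : ℤ} (hk : ¬ (q : ℤ) ∣ k) :
    ∑ l ∈ Icc 1 (q - 1), ξ ^ (k * l) = -1 := by
  have hne : ξ ^ k ≠ 1 := fun h => hk ((hprim.zpow_eq_one_iff_dvd k).mp h)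
  have hpow : (ξ ^ k) ^ q = 1 := by
    rw [← zpow_natCast, ← zpow_mul, mul_comm, zpow_mul, zpow_natCast, hprim.pow_eq_one,
      one_zpow]
  have hgeom : ∑ l ∈ range q, (ξ ^ k) ^ l = 0 := by
    rw [geom_sum_eq hne, hpow, sub_self, zero_div]
  have hrange : range q = insert 0 (Icc 1 (q - 1)) := by
    ext l; simp only [mem_range, mem_insert, mem_Icc]; omega
  rw [hrange, sum_insert (by simp), pow_zero] at hgeom
  simp only [zpow_mul, zpow_natCast]
  linear_combination hgeom

theorem X_sub_C_mul_X_sub_C_inv {u : K} (hu : u ≠ 0) :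
    (X - C u) * (X - C u⁻¹) = X ^ 2 - C (u + u⁻¹) * X + 1 := by
  have : C u * C u⁻¹ = 1 := by rw [← C_mul, mul_inv_cancel₀ hu, C_1]
  rw [C_add]; linear_combination this

theorem zpow_add_zpow_neg_mul_zpow_add_zpow_neg (hξ : ξ ≠ 0) (m n : ℤ) :
    (ξ ^ m + (ξ ^ m)⁻¹) * (ξ ^ n + (ξ ^ n)⁻¹) =
      ξ ^ (m + n) + ξ ^ (m - n) + ξ ^ (-(m - n)) + ξ ^ (-(m + n)) := by
  simp only [zpow_neg, zpow_add₀ hξ, zpow_sub₀ hξ]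
  field_simp
  ring

theorem sum_Icc_prod_X_sub_C_zpow_mul (hprim : IsPrimitiveRoot ξ q) (hq : q ≠ 0)
    (s : Fin 2 → ℤ) (hs : ∀ j, ¬ (q : ℤ) ∣ s j) (hsub : ¬ (q : ℤ) ∣ s 0 - s 1)
    (hadd : ¬ (q : ℤ) ∣ s 0 + s 1) :
    ∑ l ∈ Icc 1 (q - 1), ∏ j, (X - C (ξ ^ (s j * l))) * (X - C (ξ ^ (-(s j) * l))) =
      ((q : K[X]) - 1) * (X ^ 4 + 2 * X ^ 2 + 1) + 4 * (X ^ 3 + X) - 4 * X ^ 2 := by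
  have hξ : ξ ≠ 0 := hprim.ne_zero hq
  have hsum : ∀ k : ℤ, ¬ (q : ℤ) ∣ k → ∑ l ∈ Icc 1 (q - 1), ξ ^ (k * l) = -1 :=
    fun k hk => hprim.sum_Icc_zpow_mul_eq_neg_one hq hk
  have hneg : ∀ k : ℤ, ¬ (q : ℤ) ∣ k → ¬ (q : ℤ) ∣ -k := fun k hk => by rwa [dvd_neg]
  have hquad : ∀ (j : Fin 2) (l : ℕ),
      (X - C (ξ ^ (s j * l))) * (X - C (ξ ^ (-(s j) * l))) =
        X ^ 2 - C (ξ ^ (s j * l) + (ξ ^ (s j * l))⁻¹) * X + 1 := by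
    intro j l
    rw [neg_mul, zpow_neg]
    exact X_sub_C_mul_X_sub_C_inv (zpow_ne_zero _ hξ)
  have htrace : ∀ k : ℤ, ¬ (q : ℤ) ∣ k →
      ∑ l ∈ Icc 1 (q - 1), (ξ ^ (k * l) + (ξ ^ (k * l))⁻¹) = -2 := by
    intro k hk
    simp only [sum_add_distrib, ← zpow_neg, ← neg_mul]
    rw [hsum _ hk, hsum _ (hneg _ hk)]
    norm_num
  have hlin : ∑ l ∈ Icc 1 (q - 1), (ξ ^ (s 0 * l) + (ξ ^ (s 0 * l))⁻¹
      + (ξ ^ (s 1 * l) + (ξ ^ (s 1 * l))⁻¹)) = -4 := by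
    rw [sum_add_distrib, htrace _ (hs 0), htrace _ (hs 1)]
    norm_num
  have hbil : ∑ l ∈ Icc 1 (q - 1), (ξ ^ (s 0 * l) + (ξ ^ (s 0 * l))⁻¹)
      * (ξ ^ (s 1 * l) + (ξ ^ (s 1 * l))⁻¹) = -4 := by
    simp only [zpow_add_zpow_neg_mul_zpow_add_zpow_neg hξ, ← add_mul, ← sub_mul, ← neg_mul,
      sum_add_distrib]
    rw [hsum _ hadd, hsum _ hsub, hsum _ (hneg _ hsub), hsum _ (hneg _ hadd)]
    norm_num
  rw [sum_congr rfl fun l _ => by rw [Fin.prod_univ_two, hquad, hquad],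
    sum_quadratic_mul_quadratic, hlin, hbil, Nat.card_Icc, Nat.add_sub_cancel,
    Nat.cast_pred (Nat.pos_of_ne_zero hq)]
  simp only [map_neg, map_ofNat]
  ring

end

theorem psi_independent_of_pair_general (q : ℕ) (hq : q.Prime)
    (sb sb' : Fin 2 → ℤ)
    (hcop : ∀ j, IsCoprime (sb j) (q : ℤ)) (hcop' : ∀ j, IsCoprime (sb' j) (q : ℤ))
    (hdist : ∀ i j, i ≠ j → ¬ ((q : ℤ) ∣ (sb i - sb j)) ∧ ¬ ((q : ℤ) ∣ (sb i + sb j)))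
    (hdist' : ∀ i j, i ≠ j → ¬ ((q : ℤ) ∣ (sb' i - sb' j)) ∧ ¬ ((q : ℤ) ∣ (sb' i + sb' j)))
    (ξ : ℂ) (hξ : ξ = Complex.exp (2 * Real.pi * Complex.I / q)) :
    (∑ l ∈ Finset.Icc 1 (q - 1),
        ∏ j, (X - C (ξ ^ (sb j * l))) * (X - C (ξ ^ (-(sb j) * l)))) =
      ∑ l ∈ Finset.Icc 1 (q - 1),
        ∏ j, (X - C (ξ ^ (sb' j * l))) * (X - C (ξ ^ (-(sb' j) * l))) := by
  have hprim : IsPrimitiveRoot ξ q := hξ ▸ Complex.isPrimitiveRoot_exp q hq.ne_zero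
  have hunit : ¬ IsUnit (q : ℤ) := (Nat.prime_iff_prime_int.mp hq).not_isUnit
  have hpsi : ∀ s : Fin 2 → ℤ, (∀ j, IsCoprime (s j) (q : ℤ)) →
      (∀ i j, i ≠ j → ¬ ((q : ℤ) ∣ (s i - s j)) ∧ ¬ ((q : ℤ) ∣ (s i + s j))) →
      ∑ l ∈ Icc 1 (q - 1), ∏ j, (X - C (ξ ^ (s j * l))) * (X - C (ξ ^ (-(s j) * l))) =
        ((q : ℂ[X]) - 1) * (X ^ 4 + 2 * X ^ 2 + 1) + 4 * (X ^ 3 + X) - 4 * X ^ 2 :=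
    fun s hc hd => sum_Icc_prod_X_sub_C_zpow_mul hprim hq.ne_zero s
      (fun j h => hunit ((hc j).isUnit_of_dvd' h dvd_rfl))
      (hd 0 1 (by decide)).1 (hd 0 1 (by decide)).2
  rw [hpsi sb hcop hdist, hpsi sb' hcop' hdist']

/-- Let `q` be an odd prime with `q − 1 = 2m + 4` (so `h = 2`) and `ξ = e^{2πi/q}`.
The degree-4 polynomial `Ψ_Γ(z) = Σ_{l=1}^{q−1} ∏_{j=1}^{2} (z − ξ^{s̄ⱼl})(z − ξ^{−s̄ⱼl})`
is independent of the choice of the admissible pair `(s̄₁, s̄₂)`: its coefficients are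
determined by `q` alone. -/
theorem psi_independent_of_pair (q m : ℕ) (hq : q.Prime) (hodd : Odd q)
    (hm : q = 2 * m + 5)
    (sb sb' : Fin 2 → ℤ)
    (hcop : ∀ j, IsCoprime (sb j) (q : ℤ)) (hcop' : ∀ j, IsCoprime (sb' j) (q : ℤ))
    (hdist : ∀ i j, i ≠ j → ¬ ((q : ℤ) ∣ (sb i - sb j)) ∧ ¬ ((q : ℤ) ∣ (sb i + sb j)))
    (hdist' : ∀ i j, i ≠ j → ¬ ((q : ℤ) ∣ (sb' i - sb' j)) ∧ ¬ ((q : ℤ) ∣ (sb' i + sb' j)))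
    (ξ : ℂ) (hξ : ξ = Complex.exp (2 * Real.pi * Complex.I / q)) :
    (∑ l ∈ Finset.Icc 1 (q - 1),
        ∏ j, (X - C (ξ ^ (sb j * l))) * (X - C (ξ ^ (-(sb j) * l)))) =
      ∑ l ∈ Finset.Icc 1 (q - 1),
        ∏ j, (X - C (ξ ^ (sb' j * l))) * (X - C (ξ ^ (-(sb' j) * l))) :=
  psi_independent_of_pair_general q hq sb sb' hcop hcop' hdist hdist' ξ hξ
end

section
/- Let r ≥ 7 and t ≥ 1 with 3 ∤ r, q = r²t. The congruence lattices 𝓛(q; 1, 1+rt, 1+3rt) and 𝓛(q; 1, 1−rt, 1−3rt) are not ‖·‖₁-isometric; equivalently, there is no t' coprime to q, signs ε ∈ {±1}³ and permutation σ such that (1, 1+rt, 1+3rt) ≡ (ε₁t'·s'_{σ(1)}, ε₂t'·s'_{σ(2)}, ε₃t'·s'_{σ(3)}) mod q where (s'₁,s'₂,s'₃) = (1, 1−rt, 1−3rt). -/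
/-!
Write `R = rt`, so that `q = rR`, `s = (1 + vⱼR)` and `s' = (1 - vⱼR)` with `v = (0, 1, 3)`.
Modulo `R` every congruence reads `1 ≡ εⱼt'`; as `t'` is a unit and `R ∤ 2`, all signs agree, and
`εt' = 1 - aR` for some `a`. Modulo `q = rR` the congruences then say `vⱼ + v_{σ(j)} + a ≡ 0 (mod r)`.
The numbers `vⱼ + v_{σ(j)}` lie in `[0, 6]` and `r ≥ 7`, so they are all equal; but they add up to
`2 (0 + 1 + 3) = 8`, which is not a multiple of `3`.
-/

lemma sum_add_comp_perm {ι : Type*} [Fintype ι] (v : ι → ℤ) (σ : Equiv.Perm ι) :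
    ∑ j, (v j + v (σ j)) = 2 * ∑ j, v j := by
  rw [Finset.sum_add_distrib, Equiv.sum_comp σ v]
  ring

lemma not_forall_add_comp_perm_eq {ι : Type*} [Fintype ι] (v : ι → ℤ) (σ : Equiv.Perm ι)
    (hv : ¬ (Fintype.card ι : ℤ) ∣ 2 * ∑ j, v j) (c : ℤ) :
    ¬ ∀ j, v j + v (σ j) = c := by
  intro hc
  apply hv
  rw [← sum_add_comp_perm v σ, Finset.sum_congr rfl fun j _ => hc j]
  simp

lemma eq_of_dvd_mul_sub_mul_of_sign {R u e₁ e₂ : ℤ} (hR : ¬ R ∣ 2) (hu : IsCoprime u R)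
    (he₁ : e₁ = 1 ∨ e₁ = -1) (he₂ : e₂ = 1 ∨ e₂ = -1) (h : R ∣ e₁ * u - e₂ * u) : e₁ = e₂ := by
  have hdiff : R ∣ e₁ - e₂ := hu.symm.dvd_of_dvd_mul_right (by rwa [sub_mul])
  rcases he₁ with rfl | rfl <;> rcases he₂ with rfl | rfl <;> norm_num at hdiff ⊢ <;> exact hR hdiff

lemma dvd_one_sub_of_mul_dvd {r R x y e : ℤ} (h : r * R ∣ (1 + x * R) - e * (1 - y * R)) :
    R ∣ 1 - e := by
  have hR : R ∣ (1 + x * R) - e * (1 - y * R) := (dvd_mul_left R r).trans h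
  have hsplit : (1 + x * R) - e * (1 - y * R) = (1 - e) + R * (x + e * y) := by ring
  rwa [hsplit, dvd_add_left (dvd_mul_right R _)] at hR

lemma mul_dvd_one_add_sub_iff {r R x y a : ℤ} (hR : R ≠ 0) (hrR : r ∣ R) :
    r * R ∣ (1 + x * R) - (1 - a * R) * (1 - y * R) ↔ r ∣ x + y + a := by
  have hsplit : (1 + x * R) - (1 - a * R) * (1 - y * R) = R * ((x + y + a) - R * (a * y)) := by
    ring
  rw [hsplit, mul_comm r R, mul_dvd_mul_iff_left hR,
    dvd_sub_left (hrR.mul_right _)]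

theorem congruenceLattices_not_isometric_general (r t : ℕ) (hr : 7 ≤ r)
    (ht : 1 ≤ t) :
    ¬ ∃ (t' : ℤ) (_ : IsCoprime t' ((r ^ 2 * t : ℕ) : ℤ)) (ε : Fin 3 → ℤ)
        (_ : ∀ j, ε j = 1 ∨ ε j = -1) (σ : Equiv.Perm (Fin 3)),
      ∀ j, ((r ^ 2 * t : ℕ) : ℤ) ∣
        (![1, 1 + (r : ℤ) * t, 1 + 3 * (r : ℤ) * t] j -
          ε j * t' * (![1, 1 - (r : ℤ) * t, 1 - 3 * (r : ℤ) * t] (σ j))) := by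
  rintro ⟨t', hco, ε, hε, σ, h⟩
  set v : Fin 3 → ℤ := ![0, 1, 3]
  have hs : ∀ j, ![1, 1 + (r : ℤ) * t, 1 + 3 * (r : ℤ) * t] j = 1 + v j * (r * t) := by
    intro j; fin_cases j <;> simp [v]; ring
  have hs' : ∀ j, ![1, 1 - (r : ℤ) * t, 1 - 3 * (r : ℤ) * t] j = 1 - v j * (r * t) := by
    intro j; fin_cases j <;> simp [v]; ring
  have hq : ((r ^ 2 * t : ℕ) : ℤ) = r * (r * t) := by push_cast; ring
  simp only [hq, hs, hs'] at h hco
  set R : ℤ := r * t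
  have hr7 : (7 : ℤ) ≤ r := by exact_mod_cast hr
  have hR7 : 7 ≤ R := by nlinarith [(by exact_mod_cast ht : (1 : ℤ) ≤ t)]
  have hR2 : ¬ R ∣ 2 := fun h2 => by linarith [Int.le_of_dvd two_pos h2]
  have hcoR : IsCoprime t' R := hco.of_isCoprime_of_dvd_right (dvd_mul_left R r)
  have hunit : ∀ j, R ∣ 1 - ε j * t' := fun j => dvd_one_sub_of_mul_dvd (h j)
  have hsign : ∀ j, ε j = ε 0 := fun j =>
    eq_of_dvd_mul_sub_mul_of_sign hR2 hcoR (hε j) (hε 0) (by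
      simpa using dvd_sub (hunit 0) (hunit j))
  obtain ⟨a, ha⟩ := hunit 0
  have hpair : ∀ j, (r : ℤ) ∣ v j + v (σ j) + a := fun j => by
    rw [← mul_dvd_one_add_sub_iff (R := R) (by positivity) (dvd_mul_right _ _)]
    simpa [hsign j, show ε 0 * t' = 1 - a * R by linarith] using h j
  have hv : ∀ j, 0 ≤ v j ∧ v j ≤ 3 := by intro j; fin_cases j <;> simp [v]
  refine not_forall_add_comp_perm_eq v σ (by simp [v, Fin.sum_univ_three]) (v 0 + v (σ 0))
    fun j => sub_eq_zero.mp (Int.eq_zero_of_abs_lt_dvd (m := r) ?_ ?_)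
  · simpa using dvd_sub (hpair j) (hpair 0)
  · have := hv j; have := hv (σ j); have := hv 0; have := hv (σ 0)
    rw [abs_lt]; constructor <;> linarith

/-- For `r ≥ 7` with `3 ∤ r`, `t ≥ 1` and `q = r²t`, the congruence lattices
`𝓛(q; 1, 1+rt, 1+3rt)` and `𝓛(q; 1, 1−rt, 1−3rt)` are not `‖·‖₁`-isometric:
there is no unit `t'` mod `q`, signs `ε ∈ {±1}³` and permutation `σ` with
`sⱼ ≡ εⱼ t' s'_{σ(j)} (mod q)` where `s = (1, 1+rt, 1+3rt)` and `s' = (1, 1−rt, 1−3rt)`. -/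
theorem congruenceLattices_not_isometric (r t : ℕ) (hr : 7 ≤ r) (h3 : ¬ (3 ∣ r))
    (ht : 1 ≤ t) :
    ¬ ∃ (t' : ℤ) (_ : IsCoprime t' ((r ^ 2 * t : ℕ) : ℤ)) (ε : Fin 3 → ℤ)
        (_ : ∀ j, ε j = 1 ∨ ε j = -1) (σ : Equiv.Perm (Fin 3)),
      ∀ j, ((r ^ 2 * t : ℕ) : ℤ) ∣
        (![1, 1 + (r : ℤ) * t, 1 + 3 * (r : ℤ) * t] j -
          ε j * t' * (![1, 1 - (r : ℤ) * t, 1 - 3 * (r : ℤ) * t] (σ j))) :=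
  congruenceLattices_not_isometric_general r t hr ht
end

section
/- The lattices 𝓛(49; 1, 6, 15) and 𝓛(49; 1, 6, 20) in ℤ³ are ‖·‖₁*-isospectral: for every k ≥ 0 and z ∈ {0,1,2,3}, the number of vectors with one-norm k and exactly z zero coordinates is the same in both lattices. Moreover they are not ‖·‖₁-isometric. -/
/-!
Every nonzero integer `a` is uniquely `y + sign(y)·N·q` with `1 ≤ |y| ≤ N` and `q ≥ 0`; then
`|a| = |y| + N·q` and `a ≡ y (mod N)`. Folding coordinatewise, a vector of `𝓛(N; s)` becomes a
point of `𝓛(N; s)` in the box `[-N, N]ⁿ` together with some `q ∈ ℕⁿ` supported on its nonzero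
coordinates, and its one-norm and number of zeros are read off from this pair. Hence a bijection
between the box points of two lattices that preserves one-norm and zero count lifts to the whole
lattices: transport `q` along a permutation of the coordinates that matches the zero sets.

For `N = 49` the box spectra of `(1, 6, 15)` and `(1, 6, 20)` are compared by one finite
computation: the generating function `∑ X ^ (4‖y‖₁ + Z(y))` over the box points, evaluated at
`X = 2²⁰`, which exceeds their number, so its base-`X` digits are the counts. Since the first
weight is `1`, the first coordinate of a box point is one of at most three values fixed by the
other two, so only about `2·99²` points have to be visited.

Squaring removes the signs in the isometry condition, and no scalar and permutation carry the
squares `(1, 36, 29)` of `(1, 6, 15)` to the squares `(1, 36, 8)` of `(1, 6, 20)` modulo `49`.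
-/

open Finset

lemma Nat.ofDigits_ofFn (B : ℕ) : ∀ {M : ℕ} (c : Fin M → ℕ),
    Nat.ofDigits B (List.ofFn c) = ∑ i, c i * B ^ (i : ℕ)
  | 0, _ => rfl
  | M + 1, c => by
    rw [List.ofFn_succ, Nat.ofDigits_cons, ofDigits_ofFn, Fin.sum_univ_succ, mul_sum]
    simp [pow_succ, mul_comm, mul_left_comm]

lemma Int.natAbs_sign_mul_natCast {a : ℤ} (ha : a ≠ 0) (n : ℕ) : (a.sign * n).natAbs = n := by
  rw [Int.natAbs_mul, Int.natAbs_sign_of_ne_zero ha, one_mul, Int.natAbs_natCast]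

lemma Int.sign_sign_mul_natCast (a : ℤ) {n : ℕ} (hn : n ≠ 0) : (a.sign * n).sign = a.sign := by
  rw [Int.sign_mul, Int.sign_sign, Int.sign_natCast_of_ne_zero hn, mul_one]

namespace Finset

lemma card_filter_eq_of_sum_pow_eq {α : Type*} {P Q : Finset α} (φ : α → ℕ) {B : ℕ}
    (hP : #P < B) (hQ : #Q < B) (h : ∑ x ∈ P, B ^ φ x = ∑ x ∈ Q, B ^ φ x) (i : ℕ) :
    #{x ∈ P | φ x = i} = #{x ∈ Q | φ x = i} := by
  set M := max (P.sup φ) (Q.sup φ) + 1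
  have hdigits : ∀ R : Finset α, (∀ x ∈ R, φ x < M) →
      ∑ x ∈ R, B ^ φ x = Nat.ofDigits B (List.ofFn fun i : Fin M => #{x ∈ R | φ x = i}) := by
    intro R hR
    rw [Nat.ofDigits_ofFn, ← sum_range (fun i => #{x ∈ R | φ x = i} * B ^ i),
      ← sum_fiberwise_of_maps_to (g := φ) (t := range M) fun x hx => mem_range.2 (hR x hx)]
    refine sum_congr rfl fun i _ => ?_
    rw [sum_congr rfl fun x hx => by rw [(mem_filter.1 hx).2], sum_const, smul_eq_mul]
  have hPM : ∀ x ∈ P, φ x < M := fun x hx =>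
    Nat.lt_add_one_iff.2 ((le_sup hx).trans (le_max_left _ _))
  have hQM : ∀ x ∈ Q, φ x < M := fun x hx =>
    Nat.lt_add_one_iff.2 ((le_sup hx).trans (le_max_right _ _))
  rcases lt_or_ge i M with hi | hi
  · rcases lt_or_ge 1 B with hB | hB
    · have := Nat.ofDigits_inj_of_len_eq hB (by simp)
        (List.forall_mem_ofFn_iff.2 fun _ => (card_filter_le _ _).trans_lt hP)
        (List.forall_mem_ofFn_iff.2 fun _ => (card_filter_le _ _).trans_lt hQ)
        ((hdigits P hPM).symm.trans (h.trans (hdigits Q hQM)))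
      exact congrFun (List.ofFn_injective this) ⟨i, hi⟩
    · rw [card_eq_zero.1 (by omega : #P = 0), card_eq_zero.1 (by omega : #Q = 0)]
  · rw [filter_false_of_mem fun x hx => (hPM x hx).trans_le hi |>.ne,
      filter_false_of_mem fun x hx => (hQM x hx).trans_le hi |>.ne]

lemma card_subtype_coe_eq_card_filter {α : Type*} (P : Finset α) (p : α → Prop)
    [DecidablePred p] :
    Fintype.card {y : P // p y} = #{x ∈ P | p x} := by
  rw [← Fintype.card_coe]
  exact Fintype.card_congr ((Equiv.subtypeSubtypeEquivSubtypeInter (· ∈ P) p).trans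
    (Equiv.subtypeEquivRight fun _ => mem_filter.symm))

lemma exists_injOn_of_card_filter_eq {α β : Type*} [DecidableEq α] [DecidableEq β]
    {P Q : Finset α} (f : α → β) (h : ∀ c, #{x ∈ P | f x = c} = #{x ∈ Q | f x = c}) :
    ∃ e : α → α, Set.MapsTo e P Q ∧ Set.InjOn e P ∧ ∀ x ∈ P, f (e x) = f x := by
  let E : P ≃ Q := Equiv.ofFiberEquiv (f := fun x : P => f x) (g := fun x : Q => f x) fun c =>
    Fintype.equivOfCardEq <| by
      rw [card_subtype_coe_eq_card_filter P (f · = c), card_subtype_coe_eq_card_filter Q (f · = c),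
        h]
  refine ⟨fun x => if hx : x ∈ P then E ⟨x, hx⟩ else x, fun x hx => ?_, fun x hx y hy hxy => ?_,
    fun x hx => ?_⟩
  · simp only [dif_pos (mem_coe.1 hx)]
    exact (E _).2
  · simp only [dif_pos (mem_coe.1 hx), dif_pos (mem_coe.1 hy)] at hxy
    exact congrArg Subtype.val (E.injective (Subtype.ext hxy))
  · simp only [dif_pos hx]
    exact Equiv.ofFiberEquiv_map (f := fun x : P => f x) (g := fun x : Q => f x) _ ⟨x, hx⟩

end Finset

namespace CongruenceLattice

def foldRep (N : ℕ) (a : ℤ) : ℤ := a.sign * ((a.natAbs - 1) % N + 1 : ℕ)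

def foldQuot (N : ℕ) (a : ℤ) : ℕ := (a.natAbs - 1) / N

def unfoldRep (N : ℕ) (y : ℤ) (q : ℕ) : ℤ := y.sign * (y.natAbs + N * q : ℕ)

variable {N : ℕ}

@[simp] lemma foldRep_eq_zero_iff {a : ℤ} : foldRep N a = 0 ↔ a = 0 := by
  simp only [foldRep, mul_eq_zero, Int.sign_eq_zero_iff_zero, Nat.cast_eq_zero,
    Nat.add_one_ne_zero, or_false]

@[simp] lemma foldQuot_zero : foldQuot N 0 = 0 := by simp [foldQuot]

lemma natAbs_foldRep {a : ℤ} (ha : a ≠ 0) : (foldRep N a).natAbs = (a.natAbs - 1) % N + 1 :=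
  Int.natAbs_sign_mul_natCast ha _

lemma natAbs_foldRep_le (hN : 0 < N) (a : ℤ) : (foldRep N a).natAbs ≤ N := by
  rcases eq_or_ne a 0 with rfl | ha
  · simp [foldRep]
  · rw [natAbs_foldRep ha]; exact Nat.mod_lt _ hN

lemma natAbs_eq_foldRep_add (a : ℤ) : a.natAbs = (foldRep N a).natAbs + N * foldQuot N a := by
  rcases eq_or_ne a 0 with rfl | ha
  · simp [foldRep]
  · rw [natAbs_foldRep ha, foldQuot]
    have := Nat.mod_add_div (a.natAbs - 1) N
    have := Int.natAbs_pos.2 ha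
    omega

lemma unfoldRep_foldRep_foldQuot (a : ℤ) : unfoldRep N (foldRep N a) (foldQuot N a) = a := by
  rw [unfoldRep, foldRep, Int.sign_sign_mul_natCast _ (Nat.add_one_ne_zero _), ← foldRep,
    ← natAbs_eq_foldRep_add, Int.sign_mul_natAbs]

lemma natAbs_unfoldRep {y : ℤ} (hy : y ≠ 0) (q : ℕ) : (unfoldRep N y q).natAbs = y.natAbs + N * q :=
  Int.natAbs_sign_mul_natCast hy _

lemma foldRep_unfoldRep {y : ℤ} (hy : y ≠ 0) (hyN : y.natAbs ≤ N) (q : ℕ) :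
    foldRep N (unfoldRep N y q) = y ∧ foldQuot N (unfoldRep N y q) = q := by
  have hpos := Int.natAbs_pos.2 hy
  have hsub : (y.natAbs + N * q) - 1 = (y.natAbs - 1) + N * q := by omega
  have hlt : y.natAbs - 1 < N := by omega
  have hne : y.natAbs + N * q ≠ 0 := by omega
  rw [foldRep, foldQuot, natAbs_unfoldRep hy, unfoldRep, Int.sign_sign_mul_natCast _ hne, hsub,
    Nat.add_mul_mod_self_left, Nat.mod_eq_of_lt hlt, Nat.add_mul_div_left _ _ (by omega),
    Nat.div_eq_of_lt hlt, Nat.sub_add_cancel hpos, Int.sign_mul_natAbs]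
  simp

lemma unfoldRep_modEq (y : ℤ) (q : ℕ) : unfoldRep N y q ≡ y [ZMOD N] := by
  have : unfoldRep N y q = y + N * (y.sign * q) := by
    rw [unfoldRep]; push_cast; rw [mul_add, Int.sign_mul_abs]; ring
  rw [this]
  exact Int.add_mul_emod_self_left ..

lemma modEq_foldRep (a : ℤ) : a ≡ foldRep N a [ZMOD N] := by
  conv_lhs => rw [← unfoldRep_foldRep_foldQuot (N := N) a]
  exact unfoldRep_modEq _ _

lemma filter_Icc_dvd_add (hN : 0 < N) (c : ℤ) :
    {y ∈ Icc (-(N : ℤ)) N | (N : ℤ) ∣ y + c} =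
      {y ∈ ({(-c) % N - N, (-c) % N, (-c) % N + N} : Finset ℤ) | y ≤ (N : ℤ)} := by
  have hN' : (0 : ℤ) < N := by exact_mod_cast hN
  have h0 := Int.emod_nonneg (-c) hN'.ne'
  have h1 := Int.emod_lt_of_pos (-c) hN'
  have hr : (N : ℤ) ∣ (-c) % N + c := by
    simpa using (Int.mod_modEq (-c) N).symm.dvd
  ext y
  simp only [mem_filter, mem_Icc, mem_insert, mem_singleton]
  constructor
  · rintro ⟨⟨hl, hu⟩, k, hk⟩
    obtain ⟨m, hm⟩ := hr
    have hy : y - (-c) % N = N * (k - m) := by linarith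
    have hk1 : -2 < k - m := by nlinarith
    have hk2 : k - m < 2 := by nlinarith
    refine ⟨?_, hu⟩
    rcases (show k - m = -1 ∨ k - m = 0 ∨ k - m = 1 by omega) with h | h | h <;> rw [h] at hy
    · left; linarith
    · right; left; linarith
    · right; right; linarith
  · rintro ⟨hy | hy | hy, hu⟩ <;> subst hy
    · exact ⟨⟨by linarith, hu⟩, by simpa [sub_add_eq_add_sub] using dvd_sub hr (dvd_refl (N : ℤ))⟩
    · exact ⟨⟨by linarith, hu⟩, hr⟩
    · exact ⟨⟨by linarith, hu⟩, by simpa [add_right_comm] using dvd_add hr (dvd_refl (N : ℤ))⟩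

variable {ι : Type*}

def unfoldVec (N : ℕ) (y : ι → ℤ) (q : ι → ℕ) : ι → ℤ := fun j => unfoldRep N (y j) (q j)

lemma unfoldVec_foldRep_foldQuot (a : ι → ℤ) :
    unfoldVec N (foldRep N ∘ a) (foldQuot N ∘ a) = a :=
  funext fun j => unfoldRep_foldRep_foldQuot (a j)

lemma foldRep_comp_unfoldVec {y : ι → ℤ} {q : ι → ℕ} (hy : ∀ j, (y j).natAbs ≤ N)
    (hq : ∀ j, y j = 0 → q j = 0) :
    foldRep N ∘ unfoldVec N y q = y ∧ foldQuot N ∘ unfoldVec N y q = q := by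
  simp only [funext_iff, Function.comp_apply, unfoldVec, ← forall_and]
  intro j
  by_cases hyj : y j = 0
  · simp [hyj, hq j hyj, unfoldRep]
  · exact foldRep_unfoldRep hyj (hy j) (q j)

variable [Fintype ι]

def lattice (N : ℕ) (s : ι → ℤ) : Set (ι → ℤ) := {a | (N : ℤ) ∣ ∑ j, a j * s j}

def oneNorm (a : ι → ℤ) : ℕ := ∑ j, (a j).natAbs

def zeroCount (a : ι → ℤ) : ℕ := #{j | a j = 0}

def shell (N : ℕ) (s : ι → ℤ) (k z : ℕ) : Set (ι → ℤ) :=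
  {a | a ∈ lattice N s ∧ oneNorm a = k ∧ zeroCount a = z}

variable {s s' : ι → ℤ}

lemma mem_lattice_congr {a b : ι → ℤ} (h : ∀ j, a j ≡ b j [ZMOD N]) :
    a ∈ lattice N s ↔ b ∈ lattice N s := by
  have : ∑ j, a j * s j ≡ ∑ j, b j * s j [ZMOD N] :=
    Int.ModEq.sum fun j _ => (h j).mul_right _
  simp only [lattice, Set.mem_ofPred_eq, Int.dvd_iff_emod_eq_zero, this.eq]

lemma mem_lattice_iff_foldRep_comp {a : ι → ℤ} :
    a ∈ lattice N s ↔ foldRep N ∘ a ∈ lattice N s :=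
  mem_lattice_congr fun j => modEq_foldRep (a j)

lemma oneNorm_eq_foldRep_add (a : ι → ℤ) :
    oneNorm a = oneNorm (foldRep N ∘ a) + N * ∑ j, foldQuot N (a j) := by
  simp only [oneNorm, Function.comp_apply, mul_sum, ← sum_add_distrib, ← natAbs_eq_foldRep_add]

lemma zeroCount_foldRep_comp (a : ι → ℤ) : zeroCount (foldRep N ∘ a) = zeroCount a := by
  simp only [zeroCount, Function.comp_apply, foldRep_eq_zero_iff]

lemma zeroCount_le (y : ι → ℤ) : zeroCount y ≤ Fintype.card ι := card_filter_le _ _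

def packedExponent (y : ι → ℤ) : ℕ := (Fintype.card ι + 1) * oneNorm y + zeroCount y

lemma packedExponent_eq_iff {y : ι → ℤ} {r z : ℕ} (hz : z ≤ Fintype.card ι) :
    packedExponent y = (Fintype.card ι + 1) * r + z ↔ oneNorm y = r ∧ zeroCount y = z := by
  refine ⟨fun h => ?_, fun ⟨hr, hz⟩ => by rw [packedExponent, hr, hz]⟩
  have hdiv := congrArg (· / (Fintype.card ι + 1)) h
  simp only [packedExponent, Nat.mul_add_div (Nat.succ_pos _),
    Nat.div_eq_of_lt (Nat.lt_succ_of_le (zeroCount_le y)), Nat.div_eq_of_lt (Nat.lt_succ_of_le hz),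
    add_zero] at hdiv
  rw [packedExponent, hdiv] at h
  exact ⟨hdiv, by omega⟩

lemma pow_packedExponent (B : ℕ) (y : ι → ℤ) :
    B ^ packedExponent y =
      ∏ j, B ^ ((Fintype.card ι + 1) * (y j).natAbs + if y j = 0 then 1 else 0) := by
  rw [prod_pow_eq_pow_sum, sum_add_distrib, ← mul_sum, sum_boole, Nat.cast_id]
  rfl

lemma exists_perm_eq_zero_iff {y y' : ι → ℤ} (h : zeroCount y' = zeroCount y) :
    ∃ σ : Equiv.Perm ι, ∀ j, y' j = 0 ↔ y (σ j) = 0 := by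
  obtain ⟨σ, hσ⟩ := Equiv.Perm.exists_map_finset_eq {j | y' j = 0} {j | y j = 0} h
  exact ⟨σ, fun j => by simpa [eq_comm] using Finset.ext_iff.1 hσ (σ j)⟩

variable [DecidableEq ι]

lemma shell_finite (N : ℕ) (s : ι → ℤ) (k z : ℕ) : (shell N s k z).Finite := by
  refine (Fintype.piFinset fun _ => Icc (-(k : ℤ)) k).finite_toSet.subset fun a ha => ?_
  simp only [Fintype.coe_piFinset, Set.mem_pi, Set.mem_univ, coe_Icc, Set.mem_Icc, true_implies]
  intro j
  have : (a j).natAbs ≤ k := by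
    rw [← ha.2.1]
    exact single_le_sum (f := fun i => (a i).natAbs) (fun i _ => Nat.zero_le _) (mem_univ j)
  omega

noncomputable def boxPoints (N : ℕ) (s : ι → ℤ) : Finset (ι → ℤ) :=
  {y ∈ Fintype.piFinset fun _ => Icc (-(N : ℤ)) N | (N : ℤ) ∣ ∑ j, y j * s j}

lemma mem_boxPoints {y : ι → ℤ} :
    y ∈ boxPoints N s ↔ y ∈ lattice N s ∧ ∀ j, (y j).natAbs ≤ N := by
  simp only [boxPoints, mem_filter, Fintype.mem_piFinset, mem_Icc, lattice, Set.mem_ofPred_eq]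
  refine ⟨fun ⟨h, hd⟩ => ⟨hd, fun j => ?_⟩, fun ⟨hd, h⟩ => ⟨fun j => ?_, hd⟩⟩
  · have := h j; omega
  · have := h j; omega

lemma foldRep_comp_mem_boxPoints (hN : 0 < N) {a : ι → ℤ} (ha : a ∈ lattice N s) :
    foldRep N ∘ a ∈ boxPoints N s :=
  mem_boxPoints.2 ⟨mem_lattice_iff_foldRep_comp.1 ha, fun j => natAbs_foldRep_le hN (a j)⟩

lemma card_boxPoints_le (N : ℕ) (s : ι → ℤ) :
    #(boxPoints N s) ≤ (2 * N + 1) ^ Fintype.card ι := by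
  refine (card_filter_le _ _).trans_eq ?_
  rw [Fintype.card_piFinset, prod_const, Int.card_Icc, card_univ]
  congr 1
  omega

theorem ncard_shell_le_of_injOn (hN : 0 < N) (e : (ι → ℤ) → (ι → ℤ))
    (he_maps : Set.MapsTo e (boxPoints N s) (boxPoints N s'))
    (he_inj : Set.InjOn e (boxPoints N s))
    (he_norm : ∀ y ∈ boxPoints N s, oneNorm (e y) = oneNorm y)
    (he_zero : ∀ y ∈ boxPoints N s, zeroCount (e y) = zeroCount y) (k z : ℕ) :
    (shell N s k z).ncard ≤ (shell N s' k z).ncard := by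
  choose! σ hσ using fun y hy => exists_perm_eq_zero_iff (he_zero y hy)
  let F : (ι → ℤ) → (ι → ℤ) := fun a =>
    unfoldVec N (e (foldRep N ∘ a)) (foldQuot N ∘ a ∘ σ (foldRep N ∘ a))
  have hF : ∀ a ∈ lattice N s, foldRep N ∘ F a = e (foldRep N ∘ a) ∧
      foldQuot N ∘ F a = foldQuot N ∘ a ∘ σ (foldRep N ∘ a) := by
    intro a ha
    have hy := foldRep_comp_mem_boxPoints hN ha
    refine foldRep_comp_unfoldVec (mem_boxPoints.1 (he_maps hy)).2 fun j hj => ?_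
    have : a (σ (foldRep N ∘ a) j) = 0 := by simpa using (hσ _ hy j).1 hj
    simp [this]
  refine Set.ncard_le_ncard_of_injOn F (fun a ⟨ha, hk, hz⟩ => ?_) (fun a ha b hb hab => ?_)
    (shell_finite N s' k z)
  · have hy := foldRep_comp_mem_boxPoints hN ha
    refine ⟨?_, ?_, ?_⟩
    · rw [mem_lattice_iff_foldRep_comp, (hF a ha).1]
      exact (mem_boxPoints.1 (he_maps hy)).1
    · rw [oneNorm_eq_foldRep_add, (hF a ha).1, he_norm _ hy]
      calc oneNorm (foldRep N ∘ a) + N * ∑ j, foldQuot N (F a j)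
          = oneNorm (foldRep N ∘ a) + N * ∑ j, foldQuot N (a (σ (foldRep N ∘ a) j)) := by
            simp only [← Function.comp_apply (f := foldQuot N), (hF a ha).2]; rfl
        _ = k := by
            rw [Equiv.sum_comp _ (fun j => foldQuot N (a j)), ← oneNorm_eq_foldRep_add, hk]
    · rw [← zeroCount_foldRep_comp (N := N), (hF a ha).1, he_zero _ hy, zeroCount_foldRep_comp,
        hz]
  · have hy : foldRep N ∘ a = foldRep N ∘ b :=
      he_inj (foldRep_comp_mem_boxPoints hN ha.1) (foldRep_comp_mem_boxPoints hN hb.1)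
        (by rw [← (hF a ha.1).1, ← (hF b hb.1).1, hab])
    have hq : foldQuot N ∘ a = foldQuot N ∘ b := by
      apply (σ (foldRep N ∘ a)).surjective.injective_comp_right
      have := (hF a ha.1).2.symm.trans ((congrArg (foldQuot N ∘ ·) hab).trans (hF b hb.1).2)
      rwa [← hy] at this
    rw [← unfoldVec_foldRep_foldQuot (N := N) a, ← unfoldVec_foldRep_foldQuot (N := N) b, hy, hq]

noncomputable def boxSpectrum (N : ℕ) (s : ι → ℤ) (r z : ℕ) : ℕ :=
  #{y ∈ boxPoints N s | oneNorm y = r ∧ zeroCount y = z}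

theorem ncard_shell_eq_of_boxSpectrum_eq (hN : 0 < N) (h : boxSpectrum N s = boxSpectrum N s')
    (k z : ℕ) : (shell N s k z).ncard = (shell N s' k z).ncard := by
  have hfib : ∀ {t t' : ι → ℤ}, boxSpectrum N t = boxSpectrum N t' → ∀ c : ℕ × ℕ,
      #{y ∈ boxPoints N t | (oneNorm y, zeroCount y) = c} =
        #{y ∈ boxPoints N t' | (oneNorm y, zeroCount y) = c} := fun h c => by
    simpa only [Prod.ext_iff, boxSpectrum] using congrFun₂ h c.1 c.2
  obtain ⟨e, he_maps, he_inj, he⟩ := exists_injOn_of_card_filter_eq _ (hfib h)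
  obtain ⟨e', he'_maps, he'_inj, he'⟩ := exists_injOn_of_card_filter_eq _ (hfib h.symm)
  exact le_antisymm
    (ncard_shell_le_of_injOn hN e he_maps he_inj (fun y hy => (Prod.ext_iff.1 (he y hy)).1)
      (fun y hy => (Prod.ext_iff.1 (he y hy)).2) k z)
    (ncard_shell_le_of_injOn hN e' he'_maps he'_inj (fun y hy => (Prod.ext_iff.1 (he' y hy)).1)
      (fun y hy => (Prod.ext_iff.1 (he' y hy)).2) k z)

theorem boxSpectrum_eq_of_sum_pow_eq {B : ℕ} (hB : (2 * N + 1) ^ Fintype.card ι < B)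
    (h : ∑ y ∈ boxPoints N s, B ^ packedExponent y = ∑ y ∈ boxPoints N s', B ^ packedExponent y) :
    boxSpectrum N s = boxSpectrum N s' := by
  funext r z
  by_cases hz : z ≤ Fintype.card ι
  · simp only [boxSpectrum, ← packedExponent_eq_iff hz]
    exact card_filter_eq_of_sum_pow_eq _ ((card_boxPoints_le N s).trans_lt hB)
      ((card_boxPoints_le N s').trans_lt hB) h _
  · have hempty : ∀ t : ι → ℤ, boxSpectrum N t r z = 0 := fun t =>
      card_eq_zero.2 <| filter_false_of_mem fun y _ hy => hz (hy.2 ▸ zeroCount_le y)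
    rw [hempty, hempty]

lemma sum_boxPoints_fin_three (N : ℕ) (b c : ℤ) (f : (Fin 3 → ℤ) → ℕ) :
    ∑ y ∈ boxPoints N ![1, b, c], f y =
      ∑ y₁ ∈ Icc (-(N : ℤ)) N, ∑ y₂ ∈ Icc (-(N : ℤ)) N,
        ∑ y₀ ∈ {y₀ ∈ Icc (-(N : ℤ)) N | (N : ℤ) ∣ y₀ + (y₁ * b + y₂ * c)}, f ![y₀, y₁, y₂] := by
  rw [← sum_product', sum_sigma']
  refine sum_nbij' (fun y => ⟨(y 1, y 2), y 0⟩) (fun x => ![x.2, x.1.1, x.1.2]) ?_ ?_ ?_ ?_ ?_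
  · intro y hy
    simp [boxPoints, Fin.forall_fin_succ, Fin.sum_univ_three, add_assoc] at hy ⊢
    tauto
  · intro x hx
    simp [boxPoints, Fin.forall_fin_succ, Fin.sum_univ_three, add_assoc] at hx ⊢
    tauto
  · intro y _
    ext j; fin_cases j <;> rfl
  · intro x _
    rfl
  · intro y _
    congr; ext j; fin_cases j <;> rfl

lemma shell_fin_three (N : ℕ) (s₀ s₁ s₂ : ℤ) (k z : ℕ) :
    shell N ![s₀, s₁, s₂] k z =
      {a | (N : ℤ) ∣ a 0 * s₀ + a 1 * s₁ + a 2 * s₂ ∧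
        (a 0).natAbs + (a 1).natAbs + (a 2).natAbs = k ∧ #{j | a j = 0} = z} := by
  ext a
  simp [shell, lattice, oneNorm, zeroCount, Fin.sum_univ_three]

theorem sum_pow_packedExponent_boxPoints_49 :
    ∑ y ∈ boxPoints 49 ![1, 6, 15], (2 ^ 20) ^ packedExponent y =
      ∑ y ∈ boxPoints 49 ![1, 6, 20], (2 ^ 20) ^ packedExponent y := by
  simp only [sum_boxPoints_fin_three, filter_Icc_dvd_add (by norm_num : 0 < 49)]
  simp only [pow_packedExponent, Fin.prod_univ_three, Fintype.card_fin, Matrix.cons_val_zero,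
    Matrix.cons_val_one, Matrix.cons_val_two, Matrix.head_cons, Matrix.tail_cons, Nat.cast_ofNat]
  decide +kernel

theorem boxSpectrum_49 : boxSpectrum 49 ![1, 6, 15] = boxSpectrum 49 ![1, 6, 20] :=
  boxSpectrum_eq_of_sum_pow_eq (by norm_num) sum_pow_packedExponent_boxPoints_49

theorem not_isometric_49 :
    ¬ ∃ (t' : ℤ) (_ : IsCoprime t' (49 : ℤ)) (ε : Fin 3 → ℤ)
        (_ : ∀ j, ε j = 1 ∨ ε j = -1) (σ : Equiv.Perm (Fin 3)),
      ∀ j, (49 : ℤ) ∣ (![1, 6, 15] j - ε j * t' * (![1, 6, 20] (σ j))) := by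
  rintro ⟨t, -, ε, hε, σ, h⟩
  have hsq : ∀ (u : ZMod 49) (σ : Equiv.Perm (Fin 3)), ∃ j,
      ((![1, 6, 15] j : ℤ) : ZMod 49) ^ 2 ≠ u * ((![1, 6, 20] (σ j) : ℤ) : ZMod 49) ^ 2 := by
    decide
  obtain ⟨j, hj⟩ := hsq ((t : ZMod 49) ^ 2) σ
  have := (ZMod.intCast_zmod_eq_zero_iff_dvd _ 49).2 (h j)
  rw [Int.cast_sub, sub_eq_zero] at this
  rcases hε j with hεj | hεj <;> apply hj <;> rw [this, hεj] <;> push_cast <;> ring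

end CongruenceLattice

/-- The congruence lattices `𝓛(49; 1, 6, 15)` and `𝓛(49; 1, 6, 20)` in `ℤ³` are
`‖·‖₁*`-isospectral (same number of vectors of each one-norm with each number of zero
coordinates) but not `‖·‖₁`-isometric (no unit multiple, signs and permutation mod 49
carries `(1,6,15)` to `(1,6,20)`). -/
theorem lattice_49_example :
    (∀ k z : ℕ,
      {a : Fin 3 → ℤ | (49 : ℤ) ∣ (a 0 * 1 + a 1 * 6 + a 2 * 15) ∧
          (a 0).natAbs + (a 1).natAbs + (a 2).natAbs = k ∧
          (Finset.univ.filter (fun j => a j = 0)).card = z}.ncard =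
      {a : Fin 3 → ℤ | (49 : ℤ) ∣ (a 0 * 1 + a 1 * 6 + a 2 * 20) ∧
          (a 0).natAbs + (a 1).natAbs + (a 2).natAbs = k ∧
          (Finset.univ.filter (fun j => a j = 0)).card = z}.ncard) ∧
    ¬ ∃ (t' : ℤ) (_ : IsCoprime t' (49 : ℤ)) (ε : Fin 3 → ℤ)
        (_ : ∀ j, ε j = 1 ∨ ε j = -1) (σ : Equiv.Perm (Fin 3)),
      ∀ j, (49 : ℤ) ∣ (![1, 6, 15] j - ε j * t' * (![1, 6, 20] (σ j))) := by
  refine ⟨fun k z => ?_, CongruenceLattice.not_isometric_49⟩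
  simpa only [CongruenceLattice.shell_fin_three, Nat.cast_ofNat] using
    CongruenceLattice.ncard_shell_eq_of_boxSpectrum_eq (by norm_num)
      CongruenceLattice.boxSpectrum_49 k z
end

section
/- Let Γ, Γ' be almost conjugate subgroups of a finite group G (i.e. there is a bijection Γ → Γ' preserving G-conjugacy). Then for every finite-dimensional complex representation (π, V) of G, the dimensions of the fixed subspaces coincide: dim V^Γ = dim V^{Γ'}. -/
/-!
By the fixed-point formula, `dim V^Γ = |Γ|⁻¹ ∑_{γ ∈ Γ} χ_π(γ)`. Grouping the sum by
`G`-conjugacy classes shows that the sum of any class function over `Γ` only depends on the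
numbers `|Γ ∩ c|`, which almost conjugacy makes equal for `Γ` and `Γ'`; applied to the
constant `1` and to the character `χ_π`, this gives `|Γ| = |Γ'|` and equal character sums.
-/

open Finset Module

namespace Subgroup

variable {G : Type*} [Group G]

def AlmostConj (H K : Subgroup G) : Prop :=
  ∀ g : G, {x ∈ (H : Set G) | IsConj g x}.ncard = {x ∈ (K : Set G) | IsConj g x}.ncard

theorem sum_conjClassesMk_eq [Fintype (ConjClasses G)] (H : Subgroup G) [Fintype H]
    {M : Type*} [AddCommMonoid M] (F : ConjClasses G → M) :
    ∑ h : H, F (ConjClasses.mk (h : G)) =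
      ∑ c, {x ∈ (H : Set G) | ConjClasses.mk x = c}.ncard • F c := by
  classical
  rw [← sum_fiberwise univ fun h : H => ConjClasses.mk (h : G)]
  refine sum_congr rfl fun c _ => ?_
  rw [sum_congr rfl fun h hh => congrArg F (mem_filter.1 hh).2, sum_const]
  congr 1
  rw [← Set.ncard_coe_finset, ← Set.ncard_image_of_injective _ Subtype.val_injective]
  congr 1
  ext x
  simp [and_comm]

theorem AlmostConj.sum_eq [Finite (ConjClasses G)] {H K : Subgroup G} (hHK : H.AlmostConj K)
    [Fintype H] [Fintype K]
    {M : Type*} [AddCommMonoid M] (f : G → M) (hf : ∀ g h, IsConj g h → f g = f h) :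
    ∑ h : H, f h = ∑ k : K, f k := by
  have := Fintype.ofFinite (ConjClasses G)
  let F : ConjClasses G → M := Quotient.lift f hf
  change ∑ h : H, F (ConjClasses.mk (h : G)) = ∑ k : K, F (ConjClasses.mk (k : G))
  simp only [sum_conjClassesMk_eq]
  refine sum_congr rfl fun c _ => ?_
  obtain ⟨g, rfl⟩ := c.exists_rep
  have hsymm : ∀ x : G, IsConj x g ↔ IsConj g x := fun _ => isConj_comm
  simp only [ConjClasses.mk_eq_mk_iff_isConj, hsymm, hHK g]

theorem AlmostConj.natCard_eq [Finite G] {H K : Subgroup G} (hHK : H.AlmostConj K) :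
    Nat.card H = Nat.card K := by
  classical
  have := Fintype.ofFinite H
  have := Fintype.ofFinite K
  rw [Nat.card_eq_fintype_card, Nat.card_eq_fintype_card, Fintype.card_eq_sum_ones,
    Fintype.card_eq_sum_ones]
  exact hHK.sum_eq (fun _ => 1) fun _ _ _ => rfl

end Subgroup

namespace Representation

variable {G k V : Type*} [Group G] [Field k] [AddCommGroup V] [Module k V]

theorem char_eq_of_isConj (ρ : Representation k G V) {g h : G} (hgh : IsConj g h) :
    ρ.character g = ρ.character h := by
  obtain ⟨c, rfl⟩ := isConj_iff.1 hgh
  exact (ρ.char_conj g c).symm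

theorem finrank_invariants_comp_subtype [CharZero k] [FiniteDimensional k V]
    (ρ : Representation k G V) (H : Subgroup G) [Fintype H] :
    (finrank k (invariants (ρ.comp H.subtype)) : k) =
      (Nat.card H : k)⁻¹ * ∑ h : H, ρ.character h := by
  have : Invertible (Nat.card H : k) := invertibleOfNonzero (Nat.cast_ne_zero.2 Nat.card_pos.ne')
  exact (card_inv_mul_sum_char_eq_finrank (ρ.comp H.subtype)).symm

end Representation

/-- If `Γ, Γ'` are almost conjugate subgroups of a finite group `G` (each `G`-conjugacy
class meets `Γ` and `Γ'` in the same number of elements), then for every finite-dimensional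
complex representation `(π, V)` of `G` the fixed subspaces have the same dimension. -/
theorem almostConjugate_dim_invariants_eq (G : Type*) [Group G] [Fintype G]
    (Γ Γ' : Subgroup G)
    (halmost : ∀ g : G, {x ∈ (Γ : Set G) | IsConj g x}.ncard =
      {x ∈ (Γ' : Set G) | IsConj g x}.ncard)
    (V : Type*) [AddCommGroup V] [Module ℂ V] [FiniteDimensional ℂ V]
    (π : Representation ℂ G V) :
    Module.finrank ℂ (Representation.invariants (π.comp Γ.subtype)) =
      Module.finrank ℂ (Representation.invariants (π.comp Γ'.subtype)) := by
  classical
  have hΓ : Γ.AlmostConj Γ' := halmost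
  rw [← Nat.cast_inj (R := ℂ), π.finrank_invariants_comp_subtype,
    π.finrank_invariants_comp_subtype, hΓ.natCard_eq,
    hΓ.sum_eq _ fun _ _ => π.char_eq_of_isConj]
end
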